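/- Let Γ be a discrete group. Suppose there exist ε > 0 and a net (f_i)_{i∈I} of positive-definite functions on Γ vanishing at infinity with f_i(e) = 1, such that for every g ∈ Γ there is i₀ ∈ I with: for all i ≥ i₀, the number f_i(g) is real and f_i(g) ≥ ε. Then Γ has the Haagerup property: there exists a net (h_j)_{j∈J} of positive-definite functions on Γ vanishing at infinity with h_j(e) = 1 such that h_j(g) → 1 for every g ∈ Γ. -/

import Mathlib

open scoped ComplexOrder

/-- A function `f : Γ → ℂ` on a group is positive-definite if all the matrices
`[f(g_k⁻¹ g_j)]` are positive semi-definite. -/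
def IsPosDefFn {Γ : Type} [Group Γ] (f : Γ → ℂ) : Prop :=
  ∀ (n : ℕ) (g : Fin n → Γ) (c : Fin n → ℂ),
    0 ≤ ∑ j, ∑ k, c j * (starRingEnd ℂ) (c k) * f ((g k)⁻¹ * g j)

/-- A function on a discrete group vanishes at infinity if each of its superlevel sets
`{g : δ ≤ |f g|}` (for `δ > 0`) is finite. -/
def VanishesAtInftyDiscrete {Γ : Type} (f : Γ → ℂ) : Prop :=
  ∀ δ : ℝ, 0 < δ → {g : Γ | δ ≤ ‖f g‖}.Finite

/-!
Pass to a pointwise limit `φ` of the `fᵢ` along an ultrafilter finer than `atTop`: it is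
positive-definite with `ε ≤ Re φ`. In the GNS pre-Hilbert space of `φ` (finitely supported
`a : Γ →₀ ℂ` with `⟪a, b⟫ = ∑ conj (a x) * b y * φ (x⁻¹ * y)`), Cauchy–Schwarz against the Dirac
mass at `1` bounds `‖a‖` below by `ε / √(Re φ 1)` on the convex hull of the Dirac masses. That
hull is convex and translation invariant, so by the parallelogram law an element `a` of nearly
minimal norm satisfies `⟪a, g • a⟫ ≈ ⟪a, a⟫` uniformly in `g`. The normalized coefficients
`g ↦ ⟪a, g • a⟫ / ⟪a, a⟫` computed with `fᵢ` instead of `φ` are positive-definite, vanish at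
infinity because `fᵢ` does, and for suitable `i` are close to `1` on any prescribed finite set.
-/

open scoped ComplexConjugate
open Filter Topology Finsupp

section

variable {Γ : Type} [Group Γ]

theorem IsPosDefFn.sum_nonneg_of_fintype {φ : Γ → ℂ} (hφ : IsPosDefFn φ) {ι : Type*}
    [Fintype ι] (g : ι → Γ) (c : ι → ℂ) :
    0 ≤ ∑ j, ∑ k, c j * conj (c k) * φ ((g k)⁻¹ * g j) := by
  let e := (Fintype.equivFin ι).symm
  convert hφ _ (g ∘ e) (c ∘ e) using 1
  rw [← e.sum_comp]
  exact Finset.sum_congr rfl fun j _ => (e.sum_comp _).symm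

theorem IsPosDefFn.conj_apply {φ : Γ → ℂ} (hφ : IsPosDefFn φ) (g : Γ) :
    conj (φ g) = φ g⁻¹ := by
  -- positivity on `δ₁ + δ_g` and on `δ₁ + i δ_g` makes both quadratic forms real
  have h₀ := hφ 1 ![1] ![1]
  have h₁ := hφ 2 ![1, g] ![1, 1]
  have h₂ := hφ 2 ![1, g] ![1, Complex.I]
  simp [Fin.sum_univ_two, Complex.nonneg_iff] at h₀ h₁ h₂
  apply Complex.ext <;> simp <;> linarith

noncomputable def gnsForm (φ : Γ → ℂ) : (Γ →₀ ℂ) →ₗ⋆[ℂ] (Γ →₀ ℂ) →ₗ[ℂ] ℂ :=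
  LinearMap.mk₂'ₛₗ (starRingEnd ℂ) (RingHom.id ℂ)
    (fun a b => a.sum fun x s => b.sum fun y t => conj s * t * φ (x⁻¹ * y))
    (fun a a' b => sum_add_index' (by simp) fun x s s' => by
      simp only [map_add, add_mul, sum_add])
    (fun c a b => by
      rw [sum_smul_index' (by simp), smul_eq_mul, Finsupp.mul_sum]
      simp only [smul_eq_mul, Finsupp.mul_sum, map_mul, mul_assoc])
    (fun a b b' => by
      simp only [← sum_add]
      exact Finsupp.sum_congr fun x _ => sum_add_index' (by simp) fun y t t' => by ring)
    (fun c a b => by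
      simp only [RingHom.id_apply, smul_eq_mul, Finsupp.mul_sum]
      exact Finsupp.sum_congr fun x _ => by
        rw [sum_smul_index' (by simp)]
        exact Finsupp.sum_congr fun y _ => by simp only [smul_eq_mul]; ring)

theorem gnsForm_apply (φ : Γ → ℂ) (a b : Γ →₀ ℂ) :
    gnsForm φ a b = a.sum fun x s => b.sum fun y t => conj s * t * φ (x⁻¹ * y) :=
  rfl

theorem gnsForm_single_single (φ : Γ → ℂ) (x y : Γ) (s t : ℂ) :
    gnsForm φ (single x s) (single y t) = conj s * t * φ (x⁻¹ * y) := by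
  simp [gnsForm_apply]

theorem IsPosDefFn.gnsForm_self_nonneg {φ : Γ → ℂ} (hφ : IsPosDefFn φ) (a : Γ →₀ ℂ) :
    0 ≤ gnsForm φ a a := by
  convert hφ.sum_nonneg_of_fintype (fun x : a.support => (x : Γ)) (fun x => a x) using 1
  rw [gnsForm_apply, Finsupp.sum, ← Finset.sum_coe_sort, Finset.sum_comm]
  refine Finset.sum_congr rfl fun x _ => ?_
  rw [Finsupp.sum, ← Finset.sum_coe_sort]
  exact Finset.sum_congr rfl fun y _ => by ring

theorem IsPosDefFn.conj_gnsForm {φ : Γ → ℂ} (hφ : IsPosDefFn φ) (a b : Γ →₀ ℂ) :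
    conj (gnsForm φ a b) = gnsForm φ b a := by
  induction a using Finsupp.induction_linear with
  | zero => simp
  | add a a' ha ha' => simp [ha, ha']
  | single x s =>
    induction b using Finsupp.induction_linear with
    | zero => simp
    | add b b' hb hb' => simp [hb, hb']
    | single y t =>
      simp only [gnsForm_single_single, map_mul, Complex.conj_conj, hφ.conj_apply,
        mul_inv_rev, inv_inv]
      ring

theorem IsPosDefFn.norm_gnsForm_sq_le {φ : Γ → ℂ} (hφ : IsPosDefFn φ) (a b : Γ →₀ ℂ) :
    ‖gnsForm φ a b‖ ^ 2 ≤ (gnsForm φ a a).re * (gnsForm φ b b).re := by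
  let _ : PreInnerProductSpace.Core ℂ (Γ →₀ ℂ) :=
    { inner a b := gnsForm φ a b
      conj_inner_symm a b := hφ.conj_gnsForm b a
      re_inner_nonneg a := (Complex.nonneg_iff.mp (hφ.gnsForm_self_nonneg a)).1
      add_left a a' b := by simp
      smul_left a b c := by simp }
  have h := InnerProductSpace.Core.inner_mul_inner_self_le (𝕜 := ℂ) a b
  rwa [InnerProductSpace.Core.norm_inner_symm b a, ← sq] at h

theorem IsPosDefFn.norm_apply_le {φ : Γ → ℂ} (hφ : IsPosDefFn φ) (g : Γ) :
    ‖φ g‖ ≤ (φ 1).re := by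
  have h := hφ.norm_gnsForm_sq_le (single 1 1) (single g 1)
  simp only [gnsForm_single_single, map_one, one_mul, inv_one, inv_mul_cancel] at h
  have h₁ : 0 ≤ φ 1 := by
    simpa [gnsForm_single_single] using hφ.gnsForm_self_nonneg (single 1 1)
  exact (pow_le_pow_iff_left₀ (norm_nonneg _) (Complex.nonneg_iff.mp h₁).1 two_ne_zero).mp
    (h.trans_eq (sq _).symm)

theorem isClosed_setOf_isPosDefFn : IsClosed {φ : Γ → ℂ | IsPosDefFn φ} := by
  simp only [IsPosDefFn, Set.ofPred_forall]
  exact isClosed_iInter fun n => isClosed_iInter fun g => isClosed_iInter fun c =>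
    isClosed_le continuous_const (by fun_prop)

theorem continuous_gnsForm_apply (a b : Γ →₀ ℂ) :
    Continuous fun φ : Γ → ℂ => gnsForm φ a b := by
  simp only [gnsForm_apply, Finsupp.sum]
  fun_prop

noncomputable def leftTranslate (g : Γ) : (Γ →₀ ℂ) →ₗ[ℂ] Γ →₀ ℂ :=
  lmapDomain ℂ ℂ (g * ·)

theorem leftTranslate_one (a : Γ →₀ ℂ) : leftTranslate 1 a = a := by
  simp only [leftTranslate, lmapDomain_apply, one_mul]
  exact mapDomain_id

theorem leftTranslate_mul (g h : Γ) (a : Γ →₀ ℂ) :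
    leftTranslate (g * h) a = leftTranslate g (leftTranslate h a) := by
  simp only [leftTranslate, lmapDomain_apply, ← mapDomain_comp, Function.comp_def, mul_assoc]

theorem gnsForm_leftTranslate (φ : Γ → ℂ) (g : Γ) (a b : Γ →₀ ℂ) :
    gnsForm φ (leftTranslate g a) (leftTranslate g b) = gnsForm φ a b := by
  induction a using Finsupp.induction_linear with
  | zero => simp
  | add a a' ha ha' => simp [ha, ha']
  | single x s =>
    induction b using Finsupp.induction_linear with
    | zero => simp
    | add b b' hb hb' => simp [hb, hb']
    | single y t => simp [leftTranslate, gnsForm_single_single, mul_assoc]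

noncomputable def matrixCoeff (φ : Γ → ℂ) (a : Γ →₀ ℂ) (g : Γ) : ℂ :=
  gnsForm φ a (leftTranslate g a)

theorem matrixCoeff_eq_sum (φ : Γ → ℂ) (a : Γ →₀ ℂ) (g : Γ) :
    matrixCoeff φ a g = a.sum fun x s => a.sum fun y t => conj s * t * φ (x⁻¹ * (g * y)) := by
  rw [matrixCoeff, gnsForm_apply]
  exact Finsupp.sum_congr fun x _ => sum_mapDomain_index_inj (mul_right_injective g)

theorem matrixCoeff_one (φ : Γ → ℂ) (a : Γ →₀ ℂ) : matrixCoeff φ a 1 = gnsForm φ a a := by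
  rw [matrixCoeff, leftTranslate_one]

theorem matrixCoeff_inv_mul (φ : Γ → ℂ) (a : Γ →₀ ℂ) (g h : Γ) :
    matrixCoeff φ a (h⁻¹ * g) = gnsForm φ (leftTranslate h a) (leftTranslate g a) := by
  rw [matrixCoeff, ← gnsForm_leftTranslate φ h, ← leftTranslate_mul, mul_inv_cancel_left]

theorem IsPosDefFn.matrixCoeff {φ : Γ → ℂ} (hφ : IsPosDefFn φ) (a : Γ →₀ ℂ) :
    IsPosDefFn (matrixCoeff φ a) := by
  intro n g c
  have hnonneg := hφ.gnsForm_self_nonneg (∑ j, c j • leftTranslate (g j) a)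
  convert hnonneg using 1
  simp only [map_sum, map_smulₛₗ, LinearMap.sum_apply, LinearMap.smul_apply, smul_eq_mul,
    RingHom.id_apply, Finset.mul_sum, matrixCoeff_inv_mul]
  exact Finset.sum_congr rfl fun j _ => Finset.sum_congr rfl fun k _ => by ring

theorem vanishesAtInftyDiscrete_iff_tendsto {X : Type} (f : X → ℂ) :
    VanishesAtInftyDiscrete f ↔ Tendsto f cofinite (𝓝 0) := by
  simp only [VanishesAtInftyDiscrete, Metric.tendsto_nhds, dist_zero_right,
    eventually_cofinite, not_lt]

theorem VanishesAtInftyDiscrete.matrixCoeff {φ : Γ → ℂ} (hφ : VanishesAtInftyDiscrete φ)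
    (a : Γ →₀ ℂ) : VanishesAtInftyDiscrete (matrixCoeff φ a) := by
  rw [vanishesAtInftyDiscrete_iff_tendsto] at hφ ⊢
  have hterm : ∀ x y : Γ, Tendsto (fun g => φ (x⁻¹ * (g * y))) cofinite (𝓝 0) := fun x y =>
    hφ.comp ((mul_right_injective x⁻¹).comp (mul_left_injective y)).tendsto_cofinite
  simp only [funext (matrixCoeff_eq_sum φ a), Finsupp.sum]
  simpa using tendsto_finsetSum _ fun x _ => tendsto_finsetSum _ fun y _ =>
    (hterm x y).const_mul (conj (a x) * a y)

variable (Γ) in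
def probVectors : Set (Γ →₀ ℂ) := convexHull ℝ (Set.range fun g => single g 1)

theorem leftTranslate_mem_probVectors {a : Γ →₀ ℂ} (ha : a ∈ probVectors Γ) (g : Γ) :
    leftTranslate g a ∈ probVectors Γ := by
  have himage : (leftTranslate g).restrictScalars ℝ '' Set.range (fun x => single x (1 : ℂ)) ⊆
      Set.range fun x => single x 1 := by
    rintro _ ⟨_, ⟨x, rfl⟩, rfl⟩
    exact ⟨g * x, by simp [leftTranslate]⟩
  refine convexHull_mono himage ?_
  rw [← LinearMap.image_convexHull]
  exact Set.mem_image_of_mem _ ha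

theorem le_re_gnsForm_single_one {φ : Γ → ℂ} {ε : ℝ} (hφε : ∀ g, ε ≤ (φ g).re)
    {a : Γ →₀ ℂ} (ha : a ∈ probVectors Γ) : ε ≤ (gnsForm φ (single 1 1) a).re := by
  refine convexHull_min (t := {w | ε ≤ (gnsForm φ (single 1 1) w).re}) ?_
    (convex_halfSpace_ge ?_ ε) ha
  · rintro _ ⟨g, rfl⟩
    simpa [gnsForm_single_single] using hφε g
  · exact (Complex.reLm.comp ((gnsForm φ (single 1 1)).restrictScalars ℝ)).isLinear

theorem IsPosDefFn.sq_le_re_mul_re_gnsForm_self {φ : Γ → ℂ} (hφ : IsPosDefFn φ) {ε : ℝ}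
    (hε : 0 ≤ ε) (hφε : ∀ g, ε ≤ (φ g).re) {a : Γ →₀ ℂ} (ha : a ∈ probVectors Γ) :
    ε ^ 2 ≤ (φ 1).re * (gnsForm φ a a).re := by
  have hcs := hφ.norm_gnsForm_sq_le (single 1 1) a
  simp only [gnsForm_single_single, map_one, one_mul, inv_one] at hcs
  refine le_trans ?_ hcs
  exact pow_le_pow_left₀ hε ((le_re_gnsForm_single_one hφε ha).trans (Complex.re_le_norm _)) 2

theorem gnsForm_add_self_add_gnsForm_sub_self (φ : Γ → ℂ) (a b : Γ →₀ ℂ) :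
    gnsForm φ (a + b) (a + b) + gnsForm φ (a - b) (a - b) =
      2 * gnsForm φ a a + 2 * gnsForm φ b b := by
  simp only [map_add, map_sub, LinearMap.add_apply, LinearMap.sub_apply]
  ring

theorem re_gnsForm_leftTranslate_sub_self_lt {φ : Γ → ℂ} {m η : ℝ}
    (hmin : ∀ b ∈ probVectors Γ, m ≤ (gnsForm φ b b).re) {a : Γ →₀ ℂ}
    (ha : a ∈ probVectors Γ) (haη : (gnsForm φ a a).re < m + η) (g : Γ) :
    (gnsForm φ (leftTranslate g a - a) (leftTranslate g a - a)).re < 4 * η := by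
  set b := leftTranslate g a
  have hmid : m ≤ (gnsForm φ ((2⁻¹ : ℂ) • (b + a)) ((2⁻¹ : ℂ) • (b + a))).re := by
    refine hmin _ ?_
    rw [show (2⁻¹ : ℂ) = ((2⁻¹ : ℝ) : ℂ) by norm_num, Complex.coe_smul, smul_add]
    exact convex_convexHull ℝ _ (leftTranslate_mem_probVectors ha g) ha
      (by norm_num) (by norm_num) (by norm_num)
  have hpar := congrArg Complex.re (gnsForm_add_self_add_gnsForm_sub_self φ b a)
  have hbb : gnsForm φ b b = gnsForm φ a a := gnsForm_leftTranslate φ g a a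
  simp only [map_smulₛₗ, LinearMap.smul_apply, smul_eq_mul, map_inv₀, map_ofNat] at hmid
  rw [← mul_assoc, show (2⁻¹ : ℂ) * 2⁻¹ = ((4⁻¹ : ℝ) : ℂ) by norm_num,
    Complex.re_ofReal_mul] at hmid
  simp only [Complex.add_re, Complex.mul_re, hbb, Complex.re_ofNat, Complex.im_ofNat, zero_mul,
    sub_zero] at hpar
  linarith

theorem IsPosDefFn.exists_almost_invariant {φ : Γ → ℂ} (hφ : IsPosDefFn φ) {ε : ℝ}
    (hε : 0 < ε) (hφε : ∀ g, ε ≤ (φ g).re) {δ : ℝ} (hδ : 0 < δ) :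
    ∃ a : Γ →₀ ℂ, 0 < (gnsForm φ a a).re ∧
      ∀ g, ‖gnsForm φ a (leftTranslate g a) - gnsForm φ a a‖ <
        δ * (gnsForm φ a a).re := by
  set N : (Γ →₀ ℂ) → ℝ := fun a => (gnsForm φ a a).re
  have hφ₁ : 0 < (φ 1).re := hε.trans_le (hφε 1)
  set c := ε ^ 2 / (φ 1).re
  have hc : 0 < c := by positivity
  have hcN : ∀ a ∈ probVectors Γ, c ≤ N a := fun a ha =>
    (div_le_iff₀' hφ₁).mpr (hφ.sq_le_re_mul_re_gnsForm_self hε.le hφε ha)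
  have hmin : ∀ b ∈ probVectors Γ, sInf (N '' probVectors Γ) ≤ N b := fun b hb =>
    csInf_le ⟨c, Set.forall_mem_image.mpr hcN⟩ (Set.mem_image_of_mem N hb)
  have hne : (N '' probVectors Γ).Nonempty :=
    ⟨_, Set.mem_image_of_mem N (subset_convexHull ℝ _ ⟨1, rfl⟩)⟩
  set η := δ ^ 2 * c / 4
  obtain ⟨_, ⟨a, ha, rfl⟩, haη⟩ :=
    exists_lt_of_csInf_lt hne (lt_add_of_pos_right _ (by positivity : 0 < η))
  have hNa : 0 < N a := hc.trans_le (hcN a ha)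
  refine ⟨a, hNa, fun g => ?_⟩
  have hcs := hφ.norm_gnsForm_sq_le a (leftTranslate g a - a)
  rw [map_sub] at hcs
  refine (pow_lt_pow_iff_left₀ (norm_nonneg _) (by positivity) two_ne_zero).mp ?_
  calc ‖gnsForm φ a (leftTranslate g a) - gnsForm φ a a‖ ^ 2
      ≤ N a * N (leftTranslate g a - a) := hcs
    _ < N a * (4 * η) :=
      mul_lt_mul_of_pos_left (re_gnsForm_leftTranslate_sub_self_lt hmin ha haη g) hNa
    _ = N a * (δ ^ 2 * c) := by ring
    _ ≤ N a * (δ ^ 2 * N a) := by gcongr; exact hcN a ha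
    _ = (δ * N a) ^ 2 := by ring

theorem IsPosDefFn.div_const {φ : Γ → ℂ} (hφ : IsPosDefFn φ) {c : ℂ} (hc : 0 ≤ c) :
    IsPosDefFn fun g => φ g / c := by
  intro n g d
  simpa only [div_eq_mul_inv, ← mul_assoc, Finset.sum_mul] using
    mul_nonneg (hφ n g d) (inv_nonneg_of_nonneg hc)

theorem VanishesAtInftyDiscrete.div_const {X : Type} {φ : X → ℂ}
    (hφ : VanishesAtInftyDiscrete φ) (c : ℂ) : VanishesAtInftyDiscrete fun g => φ g / c := by
  rw [vanishesAtInftyDiscrete_iff_tendsto] at hφ ⊢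
  simpa using hφ.div_const c

theorem exists_tendsto_of_isPosDefFn {I : Type} (U : Ultrafilter I) {f : I → Γ → ℂ}
    (hpd : ∀ i, IsPosDefFn (f i)) (hnorm : ∀ i, f i 1 = 1) : ∃ φ, Tendsto f U (𝓝 φ) := by
  have hK : IsCompact (Set.univ.pi fun _ : Γ => Metric.closedBall (0 : ℂ) 1) :=
    isCompact_univ_pi fun _ => isCompact_closedBall 0 1
  have hf : ∀ i, f i ∈ Set.univ.pi fun _ : Γ => Metric.closedBall (0 : ℂ) 1 := fun i g _ => by
    simpa [hnorm i] using (hpd i).norm_apply_le g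
  obtain ⟨φ, -, hφ⟩ :=
    hK.ultrafilter_le_nhds (U.map f) (le_principal_iff.2 (mem_map.2 (univ_mem' hf)))
  exact ⟨φ, hφ⟩

theorem exists_isPosDefFn_near_one_of_tendsto {I : Type} {l : Filter I} [l.NeBot]
    {f : I → Γ → ℂ} {φ : Γ → ℂ} (hvan : ∀ i, VanishesAtInftyDiscrete (f i))
    (hpd : ∀ i, IsPosDefFn (f i)) (hf : Tendsto f l (𝓝 φ)) {ε : ℝ} (hε : 0 < ε)
    (hφε : ∀ g, ε ≤ (φ g).re) (F : Finset Γ) {δ : ℝ} (hδ : 0 < δ) :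
    ∃ h : Γ → ℂ, (VanishesAtInftyDiscrete h ∧ IsPosDefFn h ∧ h 1 = 1) ∧
      ∀ g ∈ F, ‖h g - 1‖ < δ := by
  have hφ : IsPosDefFn φ := isClosed_setOf_isPosDefFn.mem_of_tendsto hf (.of_forall hpd)
  obtain ⟨a, ha₀, ha⟩ := hφ.exists_almost_invariant hε hφε hδ
  have hlim (g : Γ) : Tendsto (fun i => matrixCoeff (f i) a g) l (𝓝 (matrixCoeff φ a g)) :=
    ((continuous_gnsForm_apply _ _).tendsto φ).comp hf
  have hD : matrixCoeff φ a 1 ≠ 0 := by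
    rw [matrixCoeff_one]
    exact fun h => by simp [h] at ha₀
  have hnear (g : Γ) : matrixCoeff φ a g / matrixCoeff φ a 1 ∈ Metric.ball 1 δ := by
    rw [Metric.mem_ball, dist_eq_norm, div_sub_one hD, norm_div,
      div_lt_iff₀ (norm_pos_iff.mpr hD), matrixCoeff_one,
      ← Complex.re_eq_norm.mpr (hφ.gnsForm_self_nonneg a)]
    exact ha g
  have hev : ∀ᶠ i in l, matrixCoeff (f i) a 1 ≠ 0 ∧
      ∀ g ∈ F, matrixCoeff (f i) a g / matrixCoeff (f i) a 1 ∈ Metric.ball 1 δ :=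
    ((hlim 1).eventually_ne hD).and <| F.eventually_all.2 fun g _ =>
      ((hlim g).div (hlim 1) hD).eventually (Metric.isOpen_ball.mem_nhds (hnear g))
  obtain ⟨i, hi₀, hi⟩ := hev.exists
  refine ⟨fun g => matrixCoeff (f i) a g / matrixCoeff (f i) a 1,
    ⟨((hvan i).matrixCoeff a).div_const _, ((hpd i).matrixCoeff a).div_const ?_, div_self hi₀⟩,
    fun g hg => by simpa [dist_eq_norm] using hi g hg⟩
  rw [matrixCoeff_one]
  exact (hpd i).gnsForm_self_nonneg a

theorem exists_net_tendsto_one {P : (Γ → ℂ) → Prop}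
    (hP : ∀ (F : Finset Γ) (δ : ℝ), 0 < δ → ∃ h, P h ∧ ∀ g ∈ F, ‖h g - 1‖ < δ) :
    ∃ (J : Type) (_ : Preorder J), Nonempty J ∧ IsDirected J (· ≤ ·) ∧
      ∃ h : J → Γ → ℂ, (∀ j, P (h j)) ∧
        ∀ g : Γ, ∀ δ : ℝ, 0 < δ → ∃ j₀ : J, ∀ j, j₀ ≤ j → ‖h j g - 1‖ < δ := by
  classical
  choose h hPh hh using fun j : Finset Γ × ℕ => hP j.1 (1 / (j.2 + 1)) Nat.one_div_pos_of_nat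
  refine ⟨Finset Γ × ℕ, inferInstance, inferInstance, inferInstance, h, hPh, fun g δ hδ => ?_⟩
  obtain ⟨n, hn⟩ := exists_nat_one_div_lt hδ
  refine ⟨({g}, n), fun ⟨F, m⟩ ⟨hF, hm⟩ => ?_⟩
  calc ‖h (F, m) g - 1‖ < 1 / (m + 1) := hh (F, m) g (hF (Finset.mem_singleton_self g))
    _ ≤ 1 / (n + 1) := Nat.one_div_le_one_div hm
    _ < δ := hn

end

/-- If a discrete group `Γ` admits `ε > 0` and a net of normalized positive-definite
functions vanishing at infinity which, at every point, are eventually real-valued and `≥ ε`,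
then `Γ` has the Haagerup property. -/
theorem haagerup_of_eventually_separated_posdef
    {Γ : Type} [Group Γ]
    (ε : ℝ) (hε : 0 < ε)
    (I : Type) (pI : Preorder I) (hne : Nonempty I) (hdir : IsDirected I (· ≤ ·))
    (f : I → Γ → ℂ)
    (hvan : ∀ i, VanishesAtInftyDiscrete (f i))
    (hpd : ∀ i, IsPosDefFn (f i))
    (hnorm : ∀ i, f i 1 = 1)
    (hsep : ∀ g : Γ, ∃ i₀ : I, ∀ i, i₀ ≤ i → (ε : ℂ) ≤ f i g) :
    ∃ (J : Type) (_ : Preorder J), Nonempty J ∧ IsDirected J (· ≤ ·) ∧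
      ∃ h : J → Γ → ℂ,
        (∀ j, VanishesAtInftyDiscrete (h j) ∧ IsPosDefFn (h j) ∧ h j 1 = 1) ∧
        ∀ g : Γ, ∀ δ : ℝ, 0 < δ → ∃ j₀ : J, ∀ j, j₀ ≤ j → ‖h j g - 1‖ < δ := by
  let U := Ultrafilter.of (atTop : Filter I)
  obtain ⟨φ, hφ⟩ := exists_tendsto_of_isPosDefFn U hpd hnorm
  have hφε (g : Γ) : ε ≤ (φ g).re := by
    obtain ⟨i₀, hi₀⟩ := hsep g
    have hev : ∀ᶠ i in (U : Filter I), (ε : ℂ) ≤ f i g :=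
      Ultrafilter.of_le _ (eventually_atTop.2 ⟨i₀, hi₀⟩)
    simpa using (Complex.le_def.mp (ge_of_tendsto (tendsto_pi_nhds.mp hφ g) hev)).1
  exact exists_net_tendsto_one fun F δ hδ =>
    exists_isPosDefFn_near_one_of_tendsto hvan hpd hφ hε hφε F hδ
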